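/- Assume κ is UD-self-dual and 𝗊 : P → ℝ_{>0} is such that 𝗊² satisfies the Kerov condition with a parameter t > 0. Then for every n ≥ 0: #𝔾_{j−1} ≤ #𝔾_j for 1 ≤ j ≤ n, and the characteristic polynomial of the linear operator T_n on the (#𝔾_n)-dimensional real vector space of functions on 𝔾_n equals ∏_{j=0}^{n} (X − (1 − j(j−1+t)/((n+1)(n+t))))^{m_j}, where m_j := #𝔾_j − #𝔾_{j−1} and #𝔾_{−1} := 0. In particular, the eigenvalue 1 of T_n is simple. -/

import Mathlib

open scoped BigOperators Classical

namespace IdealGraph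

variable {P : Type*} [PartialOrder P]

/-- A finite order ideal of the poset `P`, encoded as a down-closed `Finset`. -/
def IsIdealF (s : Finset P) : Prop := ∀ ⦃x⦄, x ∈ s → ∀ ⦃y⦄, y ≤ x → y ∈ s

/-- The vertex set of the branching graph of ideals `𝔾 = J(P)`. -/
abbrev G (P : Type*) [PartialOrder P] := {s : Finset P // IsIdealF s}

/-- The `n`-th level `𝔾_n` of the branching graph. -/
abbrev Lvl (P : Type*) [PartialOrder P] (n : ℕ) := {s : Finset P // IsIdealF s ∧ s.card = n}

/-- `CoversF μ l` : `μ ↗ l` is an edge of the branching graph of ideals. -/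
def CoversF (μ l : Finset P) : Prop :=
  IsIdealF μ ∧ IsIdealF l ∧ μ ⊆ l ∧ l.card = μ.card + 1

/-- All levels `𝔾_n` of the graph are finite. -/
def LevelsFinite (P : Type*) [PartialOrder P] : Prop :=
  ∀ n : ℕ, {s : Finset P | IsIdealF s ∧ s.card = n}.Finite

/-- An edge multiplicity function is (strictly) positive on all edges. -/
def EdgePositive (κ : Finset P → Finset P → ℝ) : Prop :=
  ∀ μ l, CoversF μ l → 0 < κ μ l

/-- UD-self-duality of a multiplicity function: for every quadrangle `μ ρ ν λ`. -/
def UDSelfDual (κ : Finset P → Finset P → ℝ) : Prop :=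
  ∀ μ ρ l ν : Finset P, CoversF μ ρ → CoversF ρ ν → CoversF μ l → CoversF l ν →
    ρ ≠ l → κ μ l * κ μ ρ = κ l ν * κ ρ ν

/-- The value of a function `q : P → R` on the box `l ∖ μ` of an edge `μ ↗ l`. -/
noncomputable def bx {R : Type*} [AddCommMonoid R] (q : P → R) (μ l : Finset P) : R :=
  ∑ x ∈ l \ μ, q x

/-- The Kerov condition with parameter `t` for the function `q2 = 𝗊²`. -/
def KerovCond (κ : Finset P → Finset P → ℝ) (q2 : P → ℂ) (t : ℂ) : Prop :=
  ∀ l : Finset P, IsIdealF l →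
    (∑' ν : {ν : Finset P // CoversF l ν}, (κ l ν.1 : ℂ) ^ 2 * bx q2 l ν.1) -
      (∑' μ : {μ : Finset P // CoversF μ l}, (κ μ.1 l : ℂ) ^ 2 * bx q2 μ.1 l)
      = 2 * (l.card : ℂ) + t

/-- Weighted number of saturated chains of length `n` from the ideal `μ` up to the ideal `l`. -/
noncomputable def dimRel (κ : Finset P → Finset P → ℝ) : ℕ → Finset P → Finset P → ℝ
  | 0, μ, l => if μ = l then 1 else 0
  | n + 1, μ, l =>
      ∑ x ∈ l, if CoversF (l.erase x) l ∧ μ ⊆ l.erase x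
        then κ (l.erase x) l * dimRel κ n μ (l.erase x) else 0

/-- Relative dimension `dim(μ, l)`. -/
noncomputable def dimI (κ : Finset P → Finset P → ℝ) (μ l : Finset P) : ℝ :=
  dimRel κ (l.card - μ.card) μ l

/-- Dimension `dim l = dim(∅, l)`. -/
noncomputable def dimT (κ : Finset P → Finset P → ℝ) (l : Finset P) : ℝ :=
  dimI κ ∅ l

/-- The relative dimension function `P*_μ`. -/
noncomputable def Pstar (κ : Finset P → Finset P → ℝ) (μ l : Finset P) : ℝ :=
  (l.card.descFactorial μ.card : ℝ) * dimI κ μ l / dimT κ l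

/-- The mixed measure `M_ξ`. -/
noncomputable def Mxi (κ : Finset P → Finset P → ℝ) (q : P → ℝ) (t ξ : ℝ) (l : Finset P) : ℝ :=
  (1 - ξ) ^ t * ξ ^ l.card * (dimT κ l / (Nat.factorial l.card : ℝ)) ^ 2 * ∏ x ∈ l, q x ^ 2

/-- The coherent measure `M_n(l)` (for `n = |l|`). -/
noncomputable def Mcoh (κ : Finset P → Finset P → ℝ) (q : P → ℝ) (t : ℝ) (l : Finset P) : ℝ :=
  dimT κ l ^ 2 * (∏ x ∈ l, q x ^ 2) /
    ((Nat.factorial l.card : ℝ) * Polynomial.eval t (ascPochhammer ℝ l.card))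

/-- The jump rates `Q(l, ρ)` of the Markov jump dynamics. -/
noncomputable def Qrate (κ : Finset P → Finset P → ℝ) (q : P → ℝ) (t ξ : ℝ)
    (l ρ : Finset P) : ℝ :=
  if CoversF ρ l then (1 - ξ)⁻¹ * l.card * (κ ρ l * dimT κ ρ / dimT κ l)
  else if CoversF l ρ then
    (1 - ξ)⁻¹ * (ξ * ((l.card : ℝ) + t)) *
      ((Mcoh κ q t ρ / Mcoh κ q t l) * (κ l ρ * dimT κ l / dimT κ ρ))
  else if ρ = l then -((1 - ξ)⁻¹ * ((l.card : ℝ) + ξ * ((l.card : ℝ) + t)))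
  else 0

/-- The function `𝔐_l`. -/
noncomputable def Mfrak (κ : Finset P → Finset P → ℝ) (q : P → ℝ) (ξ : ℝ)
    (l ν : Finset P) : ℝ :=
  ∑ μ ∈ l.powerset.filter (fun s => IsIdealF s),
    (ξ / (ξ - 1)) ^ (l.card - μ.card) *
      (dimI κ μ l / (Nat.factorial (l.card - μ.card) : ℝ)) *
      (∏ x ∈ l \ μ, q x ^ 2) * Pstar κ μ ν

/-- The operator `U` built from `κ` and `q`. -/
noncomputable def Uop (κ : Finset P → Finset P → ℝ) (q : P → ℂ) (f : Finset P → ℂ) :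
    Finset P → ℂ :=
  fun l => ∑' μ : {μ : Finset P // CoversF μ l}, (κ μ.1 l : ℂ) * bx q μ.1 l * f μ.1

/-- The operator `D` built from `κ` and `q`. -/
noncomputable def Dop (κ : Finset P → Finset P → ℝ) (q : P → ℂ) (f : Finset P → ℂ) :
    Finset P → ℂ :=
  fun l => ∑' ν : {ν : Finset P // CoversF l ν}, (κ l ν.1 : ℂ) * bx q l ν.1 * f ν.1

/-- The standard basis vector `δ_l`. -/
noncomputable def delta (l : Finset P) : Finset P → ℂ := fun ρ => if ρ = l then 1 else 0


/-- Down transition probability `p↓(ν, μ)`. -/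
noncomputable def pDown {P : Type*} [PartialOrder P]
    (κ : Finset P → Finset P → ℝ) (ν μ : Finset P) : ℝ :=
  if CoversF μ ν then κ μ ν * dimT κ μ / dimT κ ν else 0

/-- Up transition probability `p↑(l, ν)`. -/
noncomputable def pUp {P : Type*} [PartialOrder P]
    (κ : Finset P → Finset P → ℝ) (q : P → ℝ) (t : ℝ) (l ν : Finset P) : ℝ :=
  if CoversF l ν then (Mcoh κ q t ν / Mcoh κ q t l) * (κ l ν * dimT κ l / dimT κ ν) else 0

/-- The up/down transition matrix `T_n(l, l')` (for `n = |l|`). -/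
noncomputable def TnMat {P : Type*} [PartialOrder P]
    (κ : Finset P → Finset P → ℝ) (q : P → ℝ) (t : ℝ) (l l' : Finset P) : ℝ :=
  ∑' ν : Lvl P (l.card + 1), pUp κ q t l ν.1 * pDown κ ν.1 l'

/-- characteristic polynomial wrapper (to control instance arguments). -/
noncomputable def charpolyOf {ι : Type*} (instF : Fintype ι) (instD : DecidableEq ι)
    (M : Matrix ι ι ℝ) : Polynomial ℝ :=
  @Matrix.charpoly ℝ _ ι instD instF M

end IdealGraph

/-!
Let `U` be the up operator on functions on the levels, with matrix entries `κ(μ,λ) 𝗊(λ∖μ)`, and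
`D = Uᵀ`. Conjugating by the diagonal matrix of the weights `dim λ · ∏_{□∈λ} 𝗊(□)` turns `T_n`
into `DU / ((n+1)(n+t))` on level `n`. An off-diagonal entry of `DU` or of `UD` is a single term,
coming from the quadrangle spanned by `λ ∪ λ'` and `λ ∩ λ'`, and UD-self-duality makes the two
agree; the Kerov condition computes the diagonal. Hence `DU - UD = 2n + t` on level `n`, so `DU`
is positive definite, `U` is injective and the levels grow. Since `UD` on level `n + 1` has the
spectrum of `DU` on level `n` together with `0` of multiplicity `#𝔾_{n+1} - #𝔾_n`, induction
gives the eigenvalues `(n+1)(n+t) - j(j-1+t)` of `DU` with multiplicities `m_j`.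
-/

open Polynomial Matrix

section LinearAlgebra

variable {K : Type*} [Field K] {ι : Type*} [Fintype ι] [DecidableEq ι]

lemma Matrix.charpoly_add_smul_one (M : Matrix ι ι K) (c : K) :
    (M + c • 1).charpoly = M.charpoly.comp (X - C c) := by
  simpa [sub_eq_add_neg, smul_one_eq_diagonal] using charpoly_sub_scalar M (-c)

lemma Matrix.charpoly_diagonal_inv_mul_mul_diagonal (A : Matrix ι ι K) {d : ι → K}
    (hd : ∀ i, d i ≠ 0) :
    (diagonal (fun i => (d i)⁻¹) * A * diagonal d).charpoly = A.charpoly := by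
  rw [charpoly_mul_comm, ← Matrix.mul_assoc, diagonal_mul_diagonal]
  simp [mul_inv_cancel₀ (hd _)]

lemma Polynomial.natDegree_prod_X_sub_C_pow {α : Type*} (s : Finset α) (a : α → K) (m : α → ℕ) :
    (∏ j ∈ s, (X - C (a j)) ^ m j).natDegree = ∑ j ∈ s, m j := by
  rw [natDegree_prod_of_monic _ _ fun j _ => (monic_X_sub_C (a j)).pow (m j)]
  simp

lemma Polynomial.rootMultiplicity_prod_X_sub_C_pow {α : Type*} (s : Finset α) (a : α → K)
    (m : α → ℕ) (b : K) :
    rootMultiplicity b (∏ j ∈ s, (X - C (a j)) ^ m j) = ∑ j ∈ s with a j = b, m j := by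
  classical
  have hne : ∏ j ∈ s, (X - C (a j)) ^ m j ≠ 0 :=
    Finset.prod_ne_zero_iff.mpr fun j _ => pow_ne_zero _ (X_sub_C_ne_zero _)
  rw [← count_roots, roots_prod _ _ hne, Finset.sum_filter]
  simp [Multiset.count_bind, Multiset.count_singleton, eq_comm]

lemma Matrix.charpoly_smul_of_eq_prod [Infinite K] {α : Type*} {M : Matrix ι ι K} {s : Finset α}
    {a : α → K} {m : α → ℕ} (hM : M.charpoly = ∏ j ∈ s, (X - C (a j)) ^ m j) {r : K}
    (hr : r ≠ 0) :
    (r • M).charpoly = ∏ j ∈ s, (X - C (r * a j)) ^ m j := by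
  have hcard : Fintype.card ι = ∑ j ∈ s, m j := by
    rw [← charpoly_natDegree_eq_dim M, hM, natDegree_prod_X_sub_C_pow]
  refine Polynomial.funext fun x => ?_
  have hscal : scalar ι x - r • M = r • (scalar ι (x / r) - M) := by
    rw [smul_sub, scalar_apply, scalar_apply, ← diagonal_smul]
    congr 2
    ext
    simp [mul_div_cancel₀ x hr]
  rw [eval_charpoly, hscal, det_smul, ← eval_charpoly, hM, hcard, ← Finset.prod_pow_eq_pow_sum]
  simp only [eval_prod, eval_pow, eval_sub, eval_X, eval_C, ← Finset.prod_mul_distrib, ← mul_pow]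
  refine Finset.prod_congr rfl fun j _ => ?_
  rw [mul_sub, mul_div_cancel₀ x hr]

end LinearAlgebra

section Positivity

variable {m n k : Type*} [Fintype m] [Fintype n] [Fintype k]

lemma Matrix.mulVec_injective_of_transpose_mul_self_eq (A : Matrix m n ℝ) (B : Matrix n k ℝ)
    [DecidableEq n] {c : ℝ} (hc : 0 < c) (h : Aᵀ * A = B * Bᵀ + c • 1) :
    Function.Injective A.mulVec := by
  refine (injective_iff_map_eq_zero A.mulVecLin).mpr fun x hx => ?_
  have hquad : x ⬝ᵥ ((Aᵀ * A) *ᵥ x) = (Bᵀ *ᵥ x) ⬝ᵥ (Bᵀ *ᵥ x) + c * (x ⬝ᵥ x) := by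
    rw [h, add_mulVec, ← mulVec_mulVec, dotProduct_add, dotProduct_mulVec, ← mulVec_transpose,
      smul_mulVec, one_mulVec, dotProduct_smul, smul_eq_mul]
  rw [← mulVec_mulVec, ← A.mulVecLin_apply, hx, mulVec_zero, dotProduct_zero] at hquad
  have hBx : 0 ≤ (Bᵀ *ᵥ x) ⬝ᵥ (Bᵀ *ᵥ x) := Finset.sum_nonneg fun i _ => mul_self_nonneg _
  have hxx : 0 ≤ x ⬝ᵥ x := Finset.sum_nonneg fun i _ => mul_self_nonneg _
  have hx0 : x ⬝ᵥ x = 0 := by nlinarith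
  exact dotProduct_self_eq_zero.mp hx0

lemma Matrix.card_le_card_of_mulVec_injective {A : Matrix m n ℝ}
    (h : Function.Injective A.mulVec) : Fintype.card n ≤ Fintype.card m := by
  simpa using LinearMap.finrank_le_finrank_of_injective (f := A.mulVecLin) h

end Positivity

section UpDown

variable {ι : ℕ → Type*} [∀ n, Fintype (ι n)] [∀ n, DecidableEq (ι n)]

/-- With `W n` the up operator from level `n` to level `n + 1` and its transpose the down
operator, this is the relation `DU - UD = 2n + t` on level `n`. -/
structure KerovCommutation (W : ∀ n, Matrix (ι (n + 1)) (ι n) ℝ) (t : ℝ) : Prop where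
  zero : (W 0)ᵀ * W 0 = t • 1
  succ : ∀ n : ℕ, (W (n + 1))ᵀ * W (n + 1) = W n * (W n)ᵀ + (2 * ((n : ℝ) + 1) + t) • 1

noncomputable def upDownEigenvalue (t : ℝ) (n j : ℕ) : ℝ :=
  ((n : ℝ) + 1) * ((n : ℝ) + t) - (j : ℝ) * ((j : ℝ) - 1 + t)

noncomputable def levelMultiplicity (ι : ℕ → Type*) (j : ℕ) : ℕ :=
  Nat.card (ι j) - if j = 0 then 0 else Nat.card (ι (j - 1))

namespace KerovCommutation

variable {W : ∀ n, Matrix (ι (n + 1)) (ι n) ℝ} {t : ℝ}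

lemma mulVec_injective (hW : KerovCommutation W t) (ht : 0 < t) (n : ℕ) :
    Function.Injective (W n).mulVec := by
  cases n with
  | zero =>
    refine (W 0).mulVec_injective_of_transpose_mul_self_eq (0 : Matrix (ι 0) (ι 0) ℝ) ht ?_
    simpa using hW.zero
  | succ n =>
    exact (W (n + 1)).mulVec_injective_of_transpose_mul_self_eq (W n) (by positivity) (hW.succ n)

lemma card_le_card_succ (hW : KerovCommutation W t) (ht : 0 < t) (n : ℕ) :
    Nat.card (ι n) ≤ Nat.card (ι (n + 1)) := by
  simpa only [Nat.card_eq_fintype_card] using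
    card_le_card_of_mulVec_injective (hW.mulVec_injective ht n)

lemma charpoly_transpose_mul_self (hW : KerovCommutation W t) (ht : 0 < t) (n : ℕ) :
    ((W n)ᵀ * W n).charpoly
      = ∏ j ∈ Finset.range (n + 1), (X - C (upDownEigenvalue t n j)) ^ levelMultiplicity ι j := by
  induction n with
  | zero =>
    rw [hW.zero, ← zero_add (t • _), charpoly_add_smul_one, charpoly_zero]
    simp [upDownEigenvalue, levelMultiplicity, Nat.card_eq_fintype_card]
  | succ n ih =>
    have hmult : levelMultiplicity ι (n + 1) = Fintype.card (ι (n + 1)) - Fintype.card (ι n) := by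
      simp [levelMultiplicity, Nat.card_eq_fintype_card]
    have hle : Fintype.card (ι n) ≤ Fintype.card (ι (n + 1)) :=
      card_le_card_of_mulVec_injective (hW.mulVec_injective ht n)
    rw [hW.succ, charpoly_add_smul_one, charpoly_mul_comm_of_le _ _ hle, ih, ← hmult,
      Finset.prod_range_succ _ (n + 1), mul_comp, pow_comp, prod_comp, mul_comm]
    congr 1
    · refine Finset.prod_congr rfl fun j _ => ?_
      simp only [pow_comp, sub_comp, X_comp, C_comp, upDownEigenvalue]
      rw [sub_sub, ← C_add]
      congr 3
      push_cast
      ring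
    · simp only [X_comp, upDownEigenvalue]
      congr 3
      push_cast
      ring

end KerovCommutation

end UpDown

namespace IdealGraph

variable {P : Type*} [PartialOrder P]

lemma IsIdealF.union {a b : Finset P} (ha : IsIdealF a) (hb : IsIdealF b) : IsIdealF (a ∪ b) := by
  intro x hx y hy
  rcases Finset.mem_union.mp hx with h | h
  · exact Finset.mem_union_left _ (ha h hy)
  · exact Finset.mem_union_right _ (hb h hy)

lemma IsIdealF.inter {a b : Finset P} (ha : IsIdealF a) (hb : IsIdealF b) : IsIdealF (a ∩ b) :=
  fun _ hx _ hy => Finset.mem_inter.mpr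
    ⟨ha (Finset.mem_inter.mp hx).1 hy, hb (Finset.mem_inter.mp hx).2 hy⟩

lemma IsIdealF.erase_of_maximal {l : Finset P} (hl : IsIdealF l) {x : P}
    (hx : Maximal (· ∈ l) x) : IsIdealF (l.erase x) := by
  intro z hz y hyz
  refine Finset.mem_erase.mpr ⟨?_, hl (Finset.mem_of_mem_erase hz) hyz⟩
  rintro rfl
  exact Finset.ne_of_mem_erase hz (le_antisymm (hx.2 (Finset.mem_of_mem_erase hz) hyz) hyz)

instance : Unique (Lvl P 0) where
  default := ⟨∅, fun _ hx => absurd hx (Finset.notMem_empty _), rfl⟩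
  uniq l := Subtype.ext (Finset.card_eq_zero.mp l.2.2)

lemma CoversF.exists_sdiff_eq_singleton {μ l : Finset P} (h : CoversF μ l) :
    ∃ x, l \ μ = {x} :=
  Finset.card_eq_one.mp (by rw [Finset.card_sdiff_of_subset h.2.2.1, h.2.2.2]; omega)

lemma CoversF.eq_union {l l' ν : Finset P} (h : CoversF l ν) (h' : CoversF l' ν) (hne : l ≠ l')
    (hcard : l.card = l'.card) : ν = l ∪ l' := by
  have hsub : l ∪ l' ⊆ ν := Finset.union_subset h.2.2.1 h'.2.2.1
  have hlt : l.card < (l ∪ l').card := Finset.card_lt_card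
    ⟨Finset.subset_union_left, fun hl => hne.symm (Finset.eq_of_subset_of_card_le
      (Finset.subset_union_right.trans hl) hcard.le)⟩
  exact (Finset.eq_of_subset_of_card_le hsub (by rw [h.2.2.2]; omega)).symm

lemma CoversF.eq_inter {l l' μ : Finset P} (h : CoversF μ l) (h' : CoversF μ l') (hne : l ≠ l')
    (hcard : l.card = l'.card) : μ = l ∩ l' := by
  have hsub : μ ⊆ l ∩ l' := Finset.subset_inter h.2.2.1 h'.2.2.1
  have hlt : (l ∩ l').card < l.card := Finset.card_lt_card
    ⟨Finset.inter_subset_left, fun hl => hne (Finset.eq_of_subset_of_card_le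
      (hl.trans Finset.inter_subset_right) hcard.ge)⟩
  exact Finset.eq_of_subset_of_card_le hsub (by have := h.2.2.2; omega)

section EdgeWeight

variable (κ : Finset P → Finset P → ℝ) (q : P → ℝ)

/-- The entries of the operator `Uop`, over `ℝ`. -/
noncomputable def edgeWeight (μ l : Finset P) : ℝ :=
  if CoversF μ l then κ μ l * bx q μ l else 0

variable {κ q}

lemma UDSelfDual.edgeWeight_union_mul_eq_inter_mul (hUD : UDSelfDual κ) {l l' : Finset P}
    (hl : IsIdealF l) (hl' : IsIdealF l') (hne : l ≠ l') (hcard : l.card = l'.card) :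
    edgeWeight κ q l (l ∪ l') * edgeWeight κ q l' (l ∪ l')
      = edgeWeight κ q (l ∩ l') l * edgeWeight κ q (l ∩ l') l' := by
  have hie := Finset.card_union_add_card_inter l l'
  by_cases hU : (l ∪ l').card = l.card + 1
  · have hI : IsIdealF (l ∩ l') := hl.inter hl'
    have c1 : CoversF l (l ∪ l') := ⟨hl, hl.union hl', Finset.subset_union_left, hU⟩
    have c2 : CoversF l' (l ∪ l') := ⟨hl', hl.union hl', Finset.subset_union_right, by omega⟩
    have c3 : CoversF (l ∩ l') l := ⟨hI, hl, Finset.inter_subset_left, by omega⟩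
    have c4 : CoversF (l ∩ l') l' := ⟨hI, hl', Finset.inter_subset_right, by omega⟩
    have b1 : bx q l (l ∪ l') = bx q (l ∩ l') l' := by
      rw [bx, bx, Finset.union_sdiff_left, Finset.sdiff_inter_self_right]
    have b2 : bx q l' (l ∪ l') = bx q (l ∩ l') l := by
      rw [bx, bx, Finset.union_sdiff_right, Finset.sdiff_inter_self_left]
    simp only [edgeWeight, if_pos c1, if_pos c2, if_pos c3, if_pos c4, b1, b2]
    linear_combination (-(bx q (l ∩ l') l * bx q (l ∩ l') l')) * hUD _ _ _ _ c3 c1 c4 c2 hne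
  · have c1 : ¬ CoversF l (l ∪ l') := fun h => hU h.2.2.2
    have c3 : ¬ CoversF (l ∩ l') l := fun h => hU (by have := h.2.2.2; omega)
    simp [edgeWeight, c1, c3]

end EdgeWeight

section LevelSums

variable {M : Type*} [AddCommMonoid M] {k : ℕ} [Fintype (Lvl P k)]

lemma sum_lvl_eq_of_support_subset_singleton (f : Finset P → M) (s : Finset P)
    (hf : ∀ x, f x ≠ 0 → IsIdealF x ∧ x.card = k) (hs : ∀ x ≠ s, f x = 0) :
    ∑ x : Lvl P k, f x.1 = f s := by
  by_cases h : f s = 0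
  · rw [h]
    refine Finset.sum_eq_zero fun x _ => ?_
    by_cases hx : x.1 = s
    · rw [hx, h]
    · exact hs _ hx
  · exact Fintype.sum_eq_single (f := fun x : Lvl P k => f x.1) ⟨s, hf s h⟩
      fun x hx => hs _ fun e => hx (Subtype.ext e)

lemma tsum_subtype_eq_sum_lvl [TopologicalSpace M] {p : Finset P → Prop}
    (hp : ∀ s, p s → IsIdealF s ∧ s.card = k) (f : Finset P → M) :
    ∑' s : {s // p s}, f s = ∑ x : Lvl P k, if p x.1 then f x.1 else 0 := by
  let e : {x : Lvl P k // p x.1} ≃ {s // p s} :=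
    (Equiv.subtypeSubtypeEquivSubtypeInter _ p).trans
      (Equiv.subtypeEquivRight fun s => ⟨And.right, fun h => ⟨hp s h, h⟩⟩)
  rw [← e.tsum_eq, tsum_fintype, ← Finset.sum_filter,
    Finset.sum_subtype (p := fun x : Lvl P k => p x.1) _ (by simp) (fun x => f x.1)]
  rfl

end LevelSums

section UpMatrix

variable {κ : Finset P → Finset P → ℝ} {q : P → ℝ} {t : ℝ}

lemma ofReal_edgeWeight_sq (μ l : Finset P) :
    ((edgeWeight κ q μ l ^ 2 : ℝ) : ℂ)
      = if CoversF μ l then (κ μ l : ℂ) ^ 2 * bx (fun x => (q x : ℂ) ^ 2) μ l else 0 := by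
  unfold edgeWeight
  split_ifs with h
  · obtain ⟨x, hx⟩ := h.exists_sdiff_eq_singleton
    simp [bx, hx, mul_pow]
  · simp

lemma KerovCond.sum_edgeWeight_sq_up_eq (hK : KerovCond κ (fun x => (q x : ℂ) ^ 2) t) {l : Finset P}
    (hl : IsIdealF l) {a b : ℕ} [Fintype (Lvl P a)] [Fintype (Lvl P b)]
    (ha : a = l.card + 1) (hb : b = l.card - 1) :
    ∑ ν : Lvl P a, edgeWeight κ q l ν.1 ^ 2
      = ∑ μ : Lvl P b, edgeWeight κ q μ.1 l ^ 2 + (2 * l.card + t) := by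
  subst ha hb
  have h := hK l hl
  rw [tsum_subtype_eq_sum_lvl (k := l.card + 1) (fun ν h => ⟨h.2.1, h.2.2.2⟩)
      fun ν => (κ l ν : ℂ) ^ 2 * bx (fun x => (q x : ℂ) ^ 2) l ν,
    tsum_subtype_eq_sum_lvl (k := l.card - 1) (fun μ h => ⟨h.1, by have := h.2.2.2; omega⟩)
      fun μ => (κ μ l : ℂ) ^ 2 * bx (fun x => (q x : ℂ) ^ 2) μ l] at h
  simp only [← ofReal_edgeWeight_sq, ← Complex.ofReal_sum] at h
  rw [← sub_eq_iff_eq_add']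
  exact_mod_cast h

lemma coversF_of_edgeWeight_ne_zero {μ l : Finset P} (h : edgeWeight κ q μ l ≠ 0) :
    CoversF μ l := by
  by_contra hc
  exact h (if_neg hc)

lemma sum_edgeWeight_mul_up_eq {l l' : Finset P} (hne : l ≠ l') (hcard : l.card = l'.card)
    {a : ℕ} [Fintype (Lvl P a)] (ha : l.card + 1 = a) :
    ∑ ν : Lvl P a, edgeWeight κ q l ν.1 * edgeWeight κ q l' ν.1
      = edgeWeight κ q l (l ∪ l') * edgeWeight κ q l' (l ∪ l') := by
  have hcov : ∀ ν, edgeWeight κ q l ν * edgeWeight κ q l' ν ≠ 0 → CoversF l ν ∧ CoversF l' ν :=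
    fun ν h => ⟨coversF_of_edgeWeight_ne_zero (left_ne_zero_of_mul h),
      coversF_of_edgeWeight_ne_zero (right_ne_zero_of_mul h)⟩
  refine sum_lvl_eq_of_support_subset_singleton _ _
    (fun ν h => ⟨(hcov ν h).1.2.1, by rw [(hcov ν h).1.2.2.2, ha]⟩) fun ν hν => ?_
  by_contra h
  exact hν ((hcov ν h).1.eq_union (hcov ν h).2 hne hcard)

lemma sum_edgeWeight_mul_down_eq {l l' : Finset P} (hne : l ≠ l') (hcard : l.card = l'.card)
    {b : ℕ} [Fintype (Lvl P b)] (hb : b + 1 = l.card) :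
    ∑ μ : Lvl P b, edgeWeight κ q μ.1 l * edgeWeight κ q μ.1 l'
      = edgeWeight κ q (l ∩ l') l * edgeWeight κ q (l ∩ l') l' := by
  have hcov : ∀ μ, edgeWeight κ q μ l * edgeWeight κ q μ l' ≠ 0 → CoversF μ l ∧ CoversF μ l' :=
    fun μ h => ⟨coversF_of_edgeWeight_ne_zero (left_ne_zero_of_mul h),
      coversF_of_edgeWeight_ne_zero (right_ne_zero_of_mul h)⟩
  refine sum_lvl_eq_of_support_subset_singleton _ _
    (fun μ h => ⟨(hcov μ h).1.1, by have := (hcov μ h).1.2.2.2; omega⟩) fun μ hμ => ?_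
  by_contra h
  exact hμ ((hcov μ h).1.eq_inter (hcov μ h).2 hne hcard)

noncomputable def upMatrix (κ : Finset P → Finset P → ℝ) (q : P → ℝ) (n : ℕ) :
    Matrix (Lvl P (n + 1)) (Lvl P n) ℝ :=
  Matrix.of fun ν l => edgeWeight κ q l.1 ν.1

variable [∀ n, Fintype (Lvl P n)]

lemma kerovCommutation_upMatrix (hUD : UDSelfDual κ)
    (hK : KerovCond κ (fun x => (q x : ℂ) ^ 2) t) : KerovCommutation (upMatrix κ q) t where
  zero := by
    ext l l'
    obtain rfl := Subsingleton.elim l l'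
    have hl : l.1.card = 0 := l.2.2
    have hnone : ∀ μ : Lvl P 0, edgeWeight κ q μ.1 l.1 = 0 :=
      fun μ => if_neg fun h => by have := h.2.2.2; omega
    simp only [mul_apply, transpose_apply, upMatrix, of_apply, ← sq]
    rw [hK.sum_edgeWeight_sq_up_eq l.2.1 (by rw [hl]) (by rw [hl])]
    simp [hnone, hl]
  succ n := by
    ext l l'
    have hl : l.1.card = n + 1 := l.2.2
    simp only [Matrix.add_apply, Matrix.smul_apply, mul_apply, transpose_apply, upMatrix, of_apply,
      smul_eq_mul]
    by_cases hll : l = l'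
    · subst hll
      simp only [← sq, one_apply_eq]
      rw [hK.sum_edgeWeight_sq_up_eq l.2.1 (b := n) (by rw [hl]) (by rw [hl]; rfl), hl]
      push_cast
      ring
    · have hne : l.1 ≠ l'.1 := fun h => hll (Subtype.ext h)
      have hcard : l.1.card = l'.1.card := by rw [l.2.2, l'.2.2]
      rw [sum_edgeWeight_mul_up_eq hne hcard (by rw [hl]),
        sum_edgeWeight_mul_down_eq hne hcard hl.symm,
        hUD.edgeWeight_union_mul_eq_inter_mul l.2.1 l'.2.1 hne hcard, one_apply_ne hll, mul_zero,
        add_zero]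

end UpMatrix

section Transition

variable {κ : Finset P → Finset P → ℝ} {q : P → ℝ} {t : ℝ}

lemma dimRel_nonneg (hκ : EdgePositive κ) (n : ℕ) (μ l : Finset P) : 0 ≤ dimRel κ n μ l := by
  induction n generalizing l with
  | zero => rw [dimRel]; positivity
  | succ n ih =>
    refine Finset.sum_nonneg fun x _ => ?_
    split_ifs with h
    · exact mul_nonneg (hκ _ _ h.1).le (ih _)
    · exact le_rfl

lemma dimT_pos (hκ : EdgePositive κ) {l : Finset P} (hl : IsIdealF l) : 0 < dimT κ l := by
  suffices ∀ n (l : Finset P), IsIdealF l → l.card = n → 0 < dimRel κ n ∅ l from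
    this _ l hl rfl
  intro n
  induction n with
  | zero => intro l _ hl0; simp [dimRel, Finset.card_eq_zero.mp hl0]
  | succ n ih =>
    intro l hl hcard
    obtain ⟨x, hx⟩ := Finset.exists_maximal (Finset.card_pos.mp (by omega : 0 < l.card))
    have hcard' : (l.erase x).card = n := by rw [Finset.card_erase_of_mem hx.1]; omega
    have hcov : CoversF (l.erase x) l :=
      ⟨hl.erase_of_maximal hx, hl, Finset.erase_subset _ _, by omega⟩
    refine Finset.sum_pos' (fun y _ => ?_) ⟨x, hx.1, ?_⟩
    · split_ifs with h
      · exact mul_nonneg (hκ _ _ h.1).le (dimRel_nonneg hκ _ _ _)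
      · exact le_rfl
    · rw [if_pos ⟨hcov, Finset.empty_subset _⟩]
      exact mul_pos (hκ _ _ hcov) (ih _ hcov.1 hcard')

variable (κ q) in
noncomputable def weightedDim (l : Finset P) : ℝ := dimT κ l * ∏ x ∈ l, q x

lemma weightedDim_pos (hκ : EdgePositive κ) (hq : ∀ x, 0 < q x) {l : Finset P}
    (hl : IsIdealF l) : 0 < weightedDim κ q l :=
  mul_pos (dimT_pos hκ hl) (Finset.prod_pos fun x _ => hq x)

lemma Mcoh_eq_weightedDim (l : Finset P) :
    Mcoh κ q t l
      = weightedDim κ q l ^ 2 / (l.card.factorial * (ascPochhammer ℝ l.card).eval t) := by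
  rw [Mcoh, weightedDim, mul_pow, Finset.prod_pow]

lemma CoversF.prod_eq {l ν : Finset P} (h : CoversF l ν) :
    ∏ x ∈ ν, q x = bx q l ν * ∏ x ∈ l, q x := by
  obtain ⟨x, hx⟩ := h.exists_sdiff_eq_singleton
  rw [← Finset.prod_sdiff h.2.2.1, hx, Finset.prod_singleton, bx, hx, Finset.sum_singleton]

lemma pUp_mul_pDown (hκ : EdgePositive κ) (hq : ∀ x, 0 < q x) (ht : 0 < t) (l l' ν : Finset P) :
    pUp κ q t l ν * pDown κ ν l'
      = (((l.card : ℝ) + 1) * ((l.card : ℝ) + t))⁻¹ *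
        ((weightedDim κ q l)⁻¹ * (edgeWeight κ q l ν * edgeWeight κ q l' ν) *
          weightedDim κ q l') := by
  by_cases h : CoversF l ν; swap
  · simp [pUp, edgeWeight, h]
  by_cases h' : CoversF l' ν; swap
  · simp [pDown, edgeWeight, h']
  have hQ : (∏ x ∈ ν, q x) ^ 2 = (bx q l ν * ∏ x ∈ l, q x) * (bx q l' ν * ∏ x ∈ l', q x) := by
    rw [sq, ← h.prod_eq, ← h'.prod_eq]
  have hl := dimT_pos hκ h.1
  have hν := dimT_pos hκ h.2.1
  have hQl : 0 < ∏ x ∈ l, q x := Finset.prod_pos fun x _ => hq x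
  have hasc : 0 < (ascPochhammer ℝ l.card).eval t := ascPochhammer_pos _ _ ht
  rw [pUp, pDown, edgeWeight, edgeWeight, if_pos h, if_pos h, if_pos h', if_pos h',
    Mcoh_eq_weightedDim, Mcoh_eq_weightedDim, h.2.2.2, Nat.factorial_succ, ascPochhammer_succ_eval]
  simp only [weightedDim, mul_pow, hQ]
  field_simp
  push_cast
  ring

variable [∀ n, Fintype (Lvl P n)]

lemma TnMat_eq_sum {n : ℕ} {l : Finset P} (hl : l.card = n) (l' : Finset P) :
    TnMat κ q t l l' = ∑ ν : Lvl P (n + 1), pUp κ q t l ν.1 * pDown κ ν.1 l' := by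
  subst hl
  exact tsum_fintype _

lemma of_TnMat_eq_conj (hκ : EdgePositive κ) (hq : ∀ x, 0 < q x) (ht : 0 < t) (n : ℕ) :
    Matrix.of (fun l l' : Lvl P n => TnMat κ q t l.1 l'.1)
      = diagonal (fun l => (weightedDim κ q l.1)⁻¹) *
        ((((n : ℝ) + 1) * ((n : ℝ) + t))⁻¹ • ((upMatrix κ q n)ᵀ * upMatrix κ q n)) *
        diagonal (fun l => weightedDim κ q l.1) := by
  ext l l'
  rw [of_apply, TnMat_eq_sum l.2.2, mul_diagonal, diagonal_mul, Matrix.smul_apply, mul_apply,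
    smul_eq_mul, Finset.mul_sum, Finset.mul_sum, Finset.sum_mul]
  refine Finset.sum_congr rfl fun ν _ => ?_
  rw [pUp_mul_pDown hκ hq ht, l.2.2]
  simp only [upMatrix, transpose_apply, of_apply]
  ring

end Transition

section Spectrum

variable [∀ n, Fintype (Lvl P n)] {κ : Finset P → Finset P → ℝ} {q : P → ℝ} {t : ℝ}

lemma charpoly_of_TnMat (hκ : EdgePositive κ) (hq : ∀ x, 0 < q x) (ht : 0 < t)
    (hUD : UDSelfDual κ) (hK : KerovCond κ (fun x => (q x : ℂ) ^ 2) t) (n : ℕ) :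
    (Matrix.of fun l l' : Lvl P n => TnMat κ q t l.1 l'.1).charpoly
      = ∏ j ∈ Finset.range (n + 1),
          (X - C (1 - ((j : ℝ) * ((j : ℝ) - 1 + t)) / (((n : ℝ) + 1) * ((n : ℝ) + t)))) ^
            levelMultiplicity (Lvl P) j := by
  have hc : (0 : ℝ) < ((n : ℝ) + 1) * ((n : ℝ) + t) := by positivity
  rw [of_TnMat_eq_conj hκ hq ht, charpoly_diagonal_inv_mul_mul_diagonal _
      fun l => (weightedDim_pos hκ hq l.2.1).ne',
    charpoly_smul_of_eq_prod ((kerovCommutation_upMatrix hUD hK).charpoly_transpose_mul_self ht n)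
      (inv_ne_zero hc.ne')]
  refine Finset.prod_congr rfl fun j _ => ?_
  rw [upDownEigenvalue]
  field_simp

lemma one_sub_div_eq_one_iff (ht : 0 < t) (n j : ℕ) :
    1 - ((j : ℝ) * ((j : ℝ) - 1 + t)) / (((n : ℝ) + 1) * ((n : ℝ) + t)) = 1 ↔ j = 0 := by
  rcases Nat.eq_zero_or_pos j with rfl | hj
  · simp
  · have hc : (0 : ℝ) < ((n : ℝ) + 1) * ((n : ℝ) + t) := by positivity
    have hj1 : (1 : ℝ) ≤ j := by exact_mod_cast hj
    have hpos : (0 : ℝ) < (j : ℝ) * ((j : ℝ) - 1 + t) := by nlinarith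
    simp only [sub_eq_self, div_eq_zero_iff, hc.ne', or_false, hpos.ne', hj.ne']

end Spectrum

/-- the spectral structure of the up/down Markov chain `T_n`: its
characteristic polynomial is `∏_{j=0}^{n} (X − (1 − j(j−1+t)/((n+1)(n+t))))^{m_j}` with
`m_j = #𝔾_j − #𝔾_{j−1}` (and `#𝔾_{−1} = 0`), the level cardinalities being nondecreasing;
in particular, the eigenvalue `1` of `T_n` is simple. -/
theorem statement10 {P : Type*} [PartialOrder P]
    (κ : Finset P → Finset P → ℝ) (q : P → ℝ) (t : ℝ)
    (hκ : EdgePositive κ) (hq : ∀ x : P, 0 < q x) (ht : 0 < t)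
    (hLF : LevelsFinite P) (hUD : UDSelfDual κ)
    (hK : KerovCond κ (fun x => ((q x : ℂ)) ^ 2) (t : ℂ)) :
    ∀ (n : ℕ) (instF : Fintype (Lvl P n)) (instD : DecidableEq (Lvl P n)),
      (∀ j : ℕ, 1 ≤ j → j ≤ n → Nat.card (Lvl P (j - 1)) ≤ Nat.card (Lvl P j)) ∧
      charpolyOf instF instD (Matrix.of fun l l' : Lvl P n => TnMat κ q t l.1 l'.1)
        = ∏ j ∈ Finset.range (n + 1),
            (Polynomial.X - Polynomial.C
                (1 - ((j : ℝ) * ((j : ℝ) - 1 + t)) / (((n : ℝ) + 1) * ((n : ℝ) + t)))) ^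
              (Nat.card (Lvl P j) - (if j = 0 then 0 else Nat.card (Lvl P (j - 1)))) ∧
      Polynomial.rootMultiplicity 1
          (charpolyOf instF instD (Matrix.of fun l l' : Lvl P n => TnMat κ q t l.1 l'.1))
        = 1 := by
  intro n instF instD
  let _ : ∀ k, Fintype (Lvl P k) := fun k => (hLF k).fintype
  have hT : charpolyOf instF instD (Matrix.of fun l l' : Lvl P n => TnMat κ q t l.1 l'.1)
      = ∏ j ∈ Finset.range (n + 1),
          (X - C (1 - ((j : ℝ) * ((j : ℝ) - 1 + t)) / (((n : ℝ) + 1) * ((n : ℝ) + t)))) ^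
            levelMultiplicity (Lvl P) j := by
    rw [charpolyOf]
    convert charpoly_of_TnMat hκ hq ht hUD hK n
  refine ⟨fun j hj _ => ?_, hT, ?_⟩
  · obtain ⟨k, rfl⟩ := Nat.exists_eq_add_of_le' hj
    exact (kerovCommutation_upMatrix hUD hK).card_le_card_succ ht k
  · rw [hT, rootMultiplicity_prod_X_sub_C_pow,
      Finset.filter_congr fun j _ => one_sub_div_eq_one_iff ht n j]
    simp [levelMultiplicity]

end IdealGraph
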